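/- arXiv:2402.15417 — 2 statements merged into one kernel-verified Lean document; each statement's English description precedes it below -/
import Mathlib

section
/- For any rack X, the first projection p₁ : Inn̄(X) → ℤ^{⊕O_X} induces an isomorphism from the abelianization of Inn̄(X) onto the free abelian group ℤ^{⊕O_X}. -/
/-!  Core framework: racks/quandles with right operation, inner automorphism group
(with opposite composition, acting on the right), associated group. -/

universe u v

noncomputable section

/-- A rack: a set with a right-distributive binary operation whose right
translations are bijective. -/
structure RackStr (X : Type u) where
  op : X → X → X
  bij : ∀ y, Function.Bijective fun x => op x y
  distrib : ∀ x y z, op (op x y) z = op (op x z) (op y z)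

/-- A quandle: a rack which is idempotent. -/
structure QuandleStr (X : Type u) extends RackStr X where
  idem : ∀ x, op x x = x

namespace RackStr

variable {X : Type u} (R : RackStr X)

/-- The right translation `s_y : x ↦ x * y`, as a permutation. -/
def s (y : X) : Equiv.Perm X := Equiv.ofBijective _ (R.bij y)

@[simp] lemma s_apply (y x : X) : R.s y x = R.op x y := rfl

/-- The right translation, as an element of the opposite of the permutation group
(the inner automorphism group is equipped with the *opposite* composition,
so that it acts on `X` on the right). -/
def sop (y : X) : (Equiv.Perm X)ᵐᵒᵖ := MulOpposite.op (R.s y)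

/-- The inner automorphism group `Inn(X)`: the subgroup (of the permutation
group with opposite multiplication) generated by the right translations. -/
def Inn : Subgroup (Equiv.Perm X)ᵐᵒᵖ := Subgroup.closure (Set.range R.sop)

/-- The relations defining the associated group `As(X)`. -/
def rels : Set (FreeGroup X) :=
  { r | ∃ x y, r = FreeGroup.of x * FreeGroup.of y *
      (FreeGroup.of y * FreeGroup.of (R.op x y))⁻¹ }

/-- The associated group `As(X) = ⟨e_x (x ∈ X) ∣ e_x e_y = e_y e_{x*y}⟩`. -/
def As : Type u := PresentedGroup R.rels

instance : Group R.As := by unfold As; infer_instance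

/-- The generator `e_x` of the associated group. -/
def e (x : X) : R.As := PresentedGroup.of x

lemma sop_rel (x y : X) : R.sop x * R.sop y = R.sop y * R.sop (R.op x y) := by
  unfold sop
  rw [← MulOpposite.op_mul, ← MulOpposite.op_mul]
  congr 1
  ext a
  simp only [Equiv.Perm.mul_apply, s_apply]
  exact R.distrib a x y

/-- The canonical homomorphism `ψ` from the associated group, sending `e_x` to
`s_x`; its image is the inner automorphism group `Inn(X)`. -/
def psi : R.As →* (Equiv.Perm X)ᵐᵒᵖ :=
  PresentedGroup.toGroup (f := R.sop) (by
    rintro r ⟨x, y, rfl⟩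
    rw [map_mul, map_mul, map_inv, map_mul]
    simp only [FreeGroup.lift_apply_of]
    rw [mul_inv_eq_one]
    exact R.sop_rel x y)

@[simp] lemma psi_e (x : X) : R.psi (R.e x) = R.sop x :=
  PresentedGroup.toGroup.of _

/-- The right action of the associated group on `X` (through `ψ`). -/
def act (x : X) (g : R.As) : X := (R.psi g).unop x

@[simp] lemma act_one (x : X) : R.act x 1 = x := by simp [act]

lemma act_mul (x : X) (g h : R.As) : R.act x (g * h) = R.act (R.act x g) h := by
  simp [act, map_mul]

@[simp] lemma act_e (x y : X) : R.act x (R.e y) = R.op x y := by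
  simp [act, sop]

/-- The orbit equivalence relation of the action of the inner automorphism group
(equivalently, of the associated group) on `X`. -/
def orbSetoid : Setoid X where
  r a b := ∃ g : R.As, R.act a g = b
  iseqv := by
    constructor
    · exact fun a => ⟨1, by simp⟩
    · rintro a b ⟨g, rfl⟩
      exact ⟨g⁻¹, by rw [← R.act_mul, mul_inv_cancel, act_one]⟩
    · rintro a b c ⟨g, rfl⟩ ⟨h, rfl⟩
      exact ⟨g * h, R.act_mul a g h⟩

/-- The set of orbits (connected components) `O_X`. -/
def Orbits : Type u := Quotient R.orbSetoid

/-- The orbit of a point. -/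
def orb (x : X) : R.Orbits := Quotient.mk R.orbSetoid x

lemma orb_op (x y : X) : R.orb (R.op x y) = R.orb x :=
  (Quot.sound ⟨R.e y, by simp⟩).symm

/-- The abelianization homomorphism `α : As(X) → ℤ^{⊕ O_X}`, sending `e_x` to the
basis element indexed by the orbit of `x`. -/
def alpha : R.As →* Multiplicative (R.Orbits →₀ ℤ) :=
  PresentedGroup.toGroup
    (f := fun x => Multiplicative.ofAdd (Finsupp.single (R.orb x) 1)) (by
    rintro r ⟨x, y, rfl⟩
    rw [map_mul, map_mul, map_inv, map_mul]
    simp only [FreeGroup.lift_apply_of]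
    rw [mul_inv_eq_one, R.orb_op x y, mul_comm])

@[simp] lemma alpha_e (x : X) :
    R.alpha (R.e x) = Multiplicative.ofAdd (Finsupp.single (R.orb x) 1) :=
  PresentedGroup.toGroup.of _

/-- `α × ψ`. -/
def alphaPsi : R.As →* Multiplicative (R.Orbits →₀ ℤ) × (Equiv.Perm X)ᵐᵒᵖ :=
  R.alpha.prod R.psi

/-- `Inn̄(X)`, the image of `α × ψ`. -/
def InnBar : Subgroup (Multiplicative (R.Orbits →₀ ℤ) × (Equiv.Perm X)ᵐᵒᵖ) :=
  R.alphaPsi.range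

/-- `s̄_x = (α × ψ)(e_x)` as an element of `Inn̄(X)`. -/
def sbar (x : X) : R.InnBar := ⟨R.alphaPsi (R.e x), ⟨R.e x, rfl⟩⟩

/-- The group homomorphism `ε : As(X) → ℤ` sending every generator to `1`. -/
def epsAs : R.As →* Multiplicative ℤ :=
  PresentedGroup.toGroup (f := fun _ => Multiplicative.ofAdd (1 : ℤ)) (by
    rintro r ⟨x, y, rfl⟩
    rw [map_mul, map_mul, map_inv, map_mul]
    simp only [FreeGroup.lift_apply_of]
    rw [mul_inv_eq_one])

@[simp] lemma epsAs_e (x : X) : R.epsAs (R.e x) = Multiplicative.ofAdd (1 : ℤ) :=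
  PresentedGroup.toGroup.of _

/-- `ε × ψ`. -/
def epsPsi : R.As →* Multiplicative ℤ × (Equiv.Perm X)ᵐᵒᵖ :=
  R.epsAs.prod R.psi

/-- The augmentation `ε₀ : ℤ^{⊕ O_X} → ℤ` sending each basis element to `1`. -/
def eps0 : (R.Orbits →₀ ℤ) →+ ℤ :=
  Finsupp.liftAddHom fun _ => AddMonoidHom.id ℤ

/-- `ε̄` on the ambient group `ℤ^{⊕ O_X} × Perm(X)ᵐᵒᵖ`: the composite of the first
projection with `ε₀`.  `Inn̄₀(X)` is `Inn̄(X) ∩ Ker ε̄`. -/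
def epsBar : Multiplicative (R.Orbits →₀ ℤ) × (Equiv.Perm X)ᵐᵒᵖ →* Multiplicative ℤ :=
  (AddMonoidHom.toMultiplicative R.eps0).comp (MonoidHom.fst _ _)

end RackStr

/-- The subgroup of (the opposite of) the permutation group consisting of the
permutations fixing `x`. -/
def fixedSub {X : Type u} (x : X) : Subgroup (Equiv.Perm X)ᵐᵒᵖ where
  carrier := { σ | σ.unop x = x }
  one_mem' := rfl
  mul_mem' := by
    intro a b ha hb
    simp only [Set.mem_setOf_eq, MulOpposite.unop_mul, Equiv.Perm.mul_apply] at *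
    rw [ha, hb]
  inv_mem' := by
    intro a ha
    simp only [Set.mem_setOf_eq, MulOpposite.unop_inv] at *
    conv_lhs => rw [← ha]
    exact Equiv.symm_apply_apply _ _

namespace RackStr

variable {X : Type u} (R : RackStr X)

/-- The stabilizer of `x ∈ X` in the associated group. -/
def stabAs (x : X) : Subgroup R.As := Subgroup.comap R.psi (fixedSub x)

lemma mem_stabAs {x : X} {g : R.As} : g ∈ R.stabAs x ↔ R.act x g = x := Iff.rfl

/-- `X` is (algebraically) connected when the inner automorphism group acts
transitively, equivalently when the associated group does. -/
def IsConnected : Prop := ∀ x y : X, ∃ g : R.As, R.act x g = y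

/-- `Inn₀(X) = ψ(Ker ε)`, the image under `ψ` of the kernel of `ε`
(equivalently, the image of `Inn̄₀(X)` under the second projection). -/
def Inn0 : Subgroup (Equiv.Perm X)ᵐᵒᵖ := Subgroup.map R.psi R.epsAs.ker

end RackStr


/-! The relation `e_x e_y = e_y e_{x*y}` says that `e_{x·g} = g⁻¹ e_x g` in `As(X)`, so any
homomorphism from `As(X)` to an abelian group takes one value on the generators of an orbit and
therefore factors through `α`. Applied to `As(X) → Inn̄(X)^ab`, this factorization inverts the map
induced by `p₁`, because `α` and `As(X) → Inn̄(X)^ab` are both surjective and `p₁ ∘ (α × ψ) = α`. -/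

namespace RackStr

variable {X : Type u} (R : RackStr X) {A : Type*} [CommGroup A]

lemma e_mul_e (x y : X) : R.e x * R.e y = R.e y * R.e (R.op x y) :=
  PresentedGroup.mk_eq_mk_of_mul_inv_mem ⟨x, y, rfl⟩

lemma e_op (x y : X) : R.e (R.op x y) = (R.e y)⁻¹ * R.e x * R.e y := by
  rw [mul_assoc, R.e_mul_e, inv_mul_cancel_left]

lemma e_act (x : X) (g : R.As) : R.e (R.act x g) = g⁻¹ * R.e x * g := by
  have hg : g ∈ Subgroup.closure (Set.range R.e) :=
    (PresentedGroup.closure_range_of R.rels).symm ▸ Subgroup.mem_top g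
  induction hg using Subgroup.closure_induction generalizing x with
  | mem _ h =>
    obtain ⟨y, rfl⟩ := h
    rw [act_e, e_op]
  | one => simp
  | mul g h _ _ ihg ihh =>
    rw [act_mul, ihh, ihg]
    group
  | inv g _ ihg =>
    have h := ihg (R.act x g⁻¹)
    rw [← act_mul, inv_mul_cancel, act_one] at h
    rw [h]
    group

lemma map_e_eq_of_orb_eq (f : R.As →* A) {x y : X} (h : R.orb x = R.orb y) :
    f (R.e x) = f (R.e y) := by
  obtain ⟨g, rfl⟩ : ∃ g, R.act x g = y := Quotient.exact h
  rw [e_act, map_mul, map_mul, map_inv, mul_right_comm, inv_mul_cancel, one_mul]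

lemma alpha_surjective : Function.Surjective R.alpha := by
  suffices h : ∀ s : R.Orbits →₀ ℤ, Multiplicative.ofAdd s ∈ R.alpha.range from
    fun s => h s.toAdd
  intro s
  induction s using Finsupp.induction with
  | zero => exact R.alpha.range.one_mem
  | single_add q n s _ _ ih =>
    obtain ⟨x, rfl⟩ : ∃ x, R.orb x = q := Quotient.exists_rep q
    have hsingle :
        Multiplicative.ofAdd (Finsupp.single (R.orb x) n) = R.alpha (R.e x ^ n) := by
      rw [map_zpow, alpha_e, ← ofAdd_zsmul, Finsupp.smul_single, smul_eq_mul, mul_one]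
    rw [ofAdd_add, hsingle]
    exact R.alpha.range.mul_mem ⟨_, rfl⟩ ih

def alphaLift (f : R.As →* A) : Multiplicative (R.Orbits →₀ ℤ) →* A :=
  AddMonoidHom.toMultiplicativeLeft <| Finsupp.liftAddHom fun q =>
    zmultiplesHom _ <| Additive.ofMul <|
      Quotient.lift (fun x => f (R.e x))
        (fun _ _ h => R.map_e_eq_of_orb_eq f (Quotient.sound h)) q

lemma alphaLift_alpha (f : R.As →* A) (g : R.As) : R.alphaLift f (R.alpha g) = f g := by
  suffices h : (R.alphaLift f).comp R.alpha = f from DFunLike.congr_fun h g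
  refine PresentedGroup.ext fun x => ?_
  show R.alphaLift f (R.alpha (R.e x)) = f (R.e x)
  rw [alpha_e]
  show Additive.toMul (Finsupp.liftAddHom _ (Finsupp.single (R.orb x) 1)) = _
  rw [Finsupp.liftAddHom_apply_single, zmultiplesHom_apply, one_zsmul]
  rfl

end RackStr

/-- For any rack `X`, the first projection `p₁ : Inn̄(X) → ℤ^{⊕O_X}`
induces an isomorphism from the abelianization of `Inn̄(X)` onto `ℤ^{⊕O_X}`. -/
theorem abelianization_innbar (X : Type u) (R : RackStr X) :
    Function.Bijective
      (Abelianization.lift ((MonoidHom.fst _ _).comp R.InnBar.subtype)) := by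
  set p := Abelianization.lift ((MonoidHom.fst _ _).comp R.InnBar.subtype)
  let f : R.As →* Abelianization R.InnBar := Abelianization.of.comp R.alphaPsi.rangeRestrict
  have hpf : ∀ g, p (f g) = R.alpha g := fun _ => rfl
  have hf : Function.Surjective f :=
    QuotientGroup.mk_surjective.comp R.alphaPsi.rangeRestrict_surjective
  refine ⟨Function.LeftInverse.injective (g := R.alphaLift f) fun a => ?_,
    Function.RightInverse.surjective (g := R.alphaLift f) fun a => ?_⟩
  · obtain ⟨g, rfl⟩ := hf a
    rw [hpf, R.alphaLift_alpha]
  · obtain ⟨g, rfl⟩ := R.alpha_surjective a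
    rw [R.alphaLift_alpha, hpf]
end
end

section
/- Let G be a group, φ an automorphism of G, and H the subgroup of G generated by the elements φ(g⁻¹)g for all g ∈ G. Then the connected component of any x in the generalized Alexander quandle Q_{G,φ} (its orbit under Inn(Q_{G,φ})) is the right coset xH; consequently, Q_{G,φ} is connected if and only if H = G. -/
/-!  Core framework: racks/quandles with right operation, inner automorphism group
(with opposite composition, acting on the right), associated group. -/

universe u v

noncomputable section

/-! Generalized Alexander quandles `Q_{G,φ}`. -/

section GenAlexander

variable {G : Type u} [Group G] (φ : G ≃* G)

/-- The generalized Alexander quandle `Q_{G,φ}`: the set `G` with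
`x * y = φ(xy⁻¹)y`. -/
def genAlexander : QuandleStr G where
  op x y := φ (x * y⁻¹) * y
  bij y := (((Equiv.mulRight y⁻¹).trans φ.toEquiv).trans (Equiv.mulRight y)).bijective
  distrib x y z := by
    show φ (φ (x * y⁻¹) * y * z⁻¹) * z =
      φ (φ (x * z⁻¹) * z * (φ (y * z⁻¹) * z)⁻¹) * (φ (y * z⁻¹) * z)
    simp only [map_mul, map_inv, mul_inv_rev]
    group
  idem x := by
    show φ (x * x⁻¹) * x = x
    simp

/-- The subgroup `H` of `G` generated by the elements `φ(g⁻¹)g`. -/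
def genAlexSubgroup : Subgroup G :=
  Subgroup.closure { h : G | ∃ g : G, h = φ g⁻¹ * g }

end GenAlexander

/-! Writing `c g = φ g⁻¹ * g` for the generators of `H`, one has `x * y = c (y * x⁻¹) * x` in
`Q_{G,φ}`: every right translation moves `x` inside its right coset `Hx`, and every `c g * x`
is reached as `x * (g * x)`. So the orbits are the right cosets of `H`, and these are the left
cosets because `H` is normal: `b * c a * b⁻¹ = (c b⁻¹)⁻¹ * c (a * b⁻¹)`. -/

theorem Subgroup.closure_normal_of_conj_mem {G : Type*} [Group G] {s : Set G}
    (h : ∀ a ∈ s, ∀ b : G, b * a * b⁻¹ ∈ closure s) : (closure s).Normal := by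
  have : closure s = normalClosure s := by
    refine le_antisymm closure_le_normalClosure ((closure_le _).2 ?_)
    intro c hc
    obtain ⟨a, ha, b, rfl⟩ := by simpa only [Group.mem_conjugatesOfSet_iff, isConj_iff] using hc
    exact h a ha b
  rw [this]
  infer_instance

namespace RackStr

variable {X : Type u} (R : RackStr X)

theorem orbSetoid_le {r : Setoid X} (h : ∀ x y, r x (R.op x y)) : R.orbSetoid ≤ r := by
  let K : Subgroup R.As :=
    { carrier := {g | ∀ x, r x (R.act x g)}
      one_mem' := fun x => by simpa only [act_one] using r.refl x
      mul_mem' := fun ha hb x => by rw [act_mul]; exact r.trans (ha x) (hb _)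
      inv_mem' := fun {g} hg x => by
        have := hg (R.act x g⁻¹)
        rw [← act_mul, inv_mul_cancel, act_one] at this
        exact r.symm this }
  have hK : ∀ g, g ∈ K := PresentedGroup.generated_by R.rels K fun y x => by
    show r x (R.act x (R.e y))
    rw [act_e]
    exact h x y
  rintro x _ ⟨g, rfl⟩
  exact hK g x

end RackStr

section GenAlexander

variable {G : Type u} [Group G] (φ : G ≃* G)

theorem genAlexander_op_eq (x y : G) :
    (genAlexander φ).op x y = φ (y * x⁻¹)⁻¹ * (y * x⁻¹) * x := by
  show φ (x * y⁻¹) * y = _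
  simp only [map_inv, mul_inv_rev, inv_inv, map_mul]
  group

theorem mem_genAlexSubgroup (g : G) : φ g⁻¹ * g ∈ genAlexSubgroup φ :=
  Subgroup.subset_closure ⟨g, rfl⟩

theorem genAlexSubgroup_normal : (genAlexSubgroup φ).Normal := by
  refine Subgroup.closure_normal_of_conj_mem ?_
  rintro _ ⟨a, rfl⟩ b
  have hconj : b * (φ a⁻¹ * a) * b⁻¹ = (φ b * b⁻¹)⁻¹ * (φ (a * b⁻¹)⁻¹ * (a * b⁻¹)) := by
    simp only [map_inv, map_mul, mul_inv_rev, inv_inv]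
    group
  have hb : φ b * b⁻¹ ∈ genAlexSubgroup φ := by simpa using mem_genAlexSubgroup φ b⁻¹
  rw [hconj]
  exact mul_mem (inv_mem hb) (mem_genAlexSubgroup φ _)

theorem genAlexander_orb_mul_left {h : G} (hh : h ∈ genAlexSubgroup φ) (x : G) :
    (genAlexander φ).orb (h * x) = (genAlexander φ).orb x := by
  induction hh using Subgroup.closure_induction generalizing x with
  | mem _ hk =>
    obtain ⟨g, rfl⟩ := hk
    rw [← RackStr.orb_op _ x (g * x), genAlexander_op_eq, mul_inv_cancel_right]
  | one => rw [one_mul]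
  | mul a b _ _ iha ihb => rw [mul_assoc, iha, ihb]
  | inv a _ iha => rw [← iha, mul_inv_cancel_left]

theorem genAlexander_orbSetoid_eq_rightRel :
    (genAlexander φ).orbSetoid = QuotientGroup.rightRel (genAlexSubgroup φ) := by
  refine le_antisymm (RackStr.orbSetoid_le _ fun x y => ?_) fun x y hxy => ?_
  · rw [QuotientGroup.rightRel_apply, genAlexander_op_eq, mul_inv_cancel_right]
    exact mem_genAlexSubgroup φ _
  · rw [QuotientGroup.rightRel_apply] at hxy
    have := genAlexander_orb_mul_left φ hxy x
    rw [inv_mul_cancel_right] at this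
    exact Quotient.exact this.symm

end GenAlexander

/-- For the generalized Alexander quandle `Q_{G,φ}` and
`H = ⟨φ(g⁻¹)g⟩`, the connected component (orbit) of any `x` is the right coset
`xH`; consequently `Q_{G,φ}` is connected iff `H = G`. -/
theorem genAlexander_orbit_eq_coset (G : Type u) [Group G] (φ : G ≃* G) :
    (∀ x : G, { y : G | ∃ g : (genAlexander φ).toRackStr.As,
        (genAlexander φ).toRackStr.act x g = y } =
      (fun h => x * h) '' (genAlexSubgroup φ : Set G)) ∧
    ((genAlexander φ).toRackStr.IsConnected ↔ genAlexSubgroup φ = ⊤) := by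
  have hrel (x y : G) : (∃ g : (genAlexander φ).toRackStr.As,
      (genAlexander φ).toRackStr.act x g = y) ↔ y * x⁻¹ ∈ genAlexSubgroup φ := by
    rw [← QuotientGroup.rightRel_apply, ← genAlexander_orbSetoid_eq_rightRel]
    rfl
  refine ⟨fun x => Set.ext fun y => ?_, ?_⟩
  · rw [Set.image_mul_left, Set.mem_ofPred_eq, hrel, Set.mem_preimage, SetLike.mem_coe,
      (genAlexSubgroup_normal φ).mem_comm_iff]
  · simp only [RackStr.IsConnected, hrel, Subgroup.eq_top_iff']
    exact ⟨fun h y => by simpa using h 1 y, fun h x y => h _⟩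
end
end
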